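/- Nash-equilibrium utilities in the asymmetric resource-sharing game: let k ≥ 2, γ > 0, â > k/γ, and let λ₁ ≥ λ₂ ≥ … ≥ λ_k > 0 be influence factors. Define M := max { m ≤ k : ∑_{i=1}^{m} 1/λᵢ − (m−1)/λ_m > 0 } and s := ∑_{m=1}^{M} 1/λ_m. Consider the k-player game where player m chooses b_m ∈ [0, â] and receives payoff φ_m(b) = λ_m b_m/(∑_{j=1}^{k} λ_j b_j) − γ b_m. Then at every Nash equilibrium b with ∑_j λ_j b_j > 0, the payoffs are φ_m(b) = ((s − (M−1)/λ_m)/s)² for every m ≤ M, and φ_m(b) = 0 for every m > M. -/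

import Mathlib

/-- Payoff of player `m` in the resource-sharing game among the players `0, …, n − 1`
with influence factors `lam` and cost factor `γ`:
`φ_m(b) = lam m * b m / (∑_{j<n} lam j * b j) − γ * b m`. -/
noncomputable def rsgPayoff (n : ℕ) (lam : ℕ → ℝ) (γ : ℝ) (b : ℕ → ℝ) (m : ℕ) : ℝ :=
  lam m * b m / (∑ j ∈ Finset.range n, lam j * b j) - γ * b m

/-- A Nash equilibrium of the resource-sharing game with actions in `[0, â]`: no player
`m < n` can strictly increase its payoff by unilaterally changing its action. -/
def IsNashRSG (n : ℕ) (lam : ℕ → ℝ) (γ ahat : ℝ) (b : ℕ → ℝ) : Prop :=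
  ∀ m < n, ∀ x ∈ Set.Icc (0 : ℝ) ahat,
    rsgPayoff n lam γ (Function.update b m x) m ≤ rsgPayoff n lam γ b m

/-!
Facing an opponents' aggregate `c > 0`, a player of weight `l` maximises
`x ↦ l x / (c + l x) - γ x` on `[0, â]`. The slope of the share term between `y` and `x` is
`l c / ((c + l y) (c + l x))`, so letting `x → y` from either side, maximality at `y` gives
`l c ≤ γ (c + l y)²`, with equality when `y > 0`.

With `B` the total weighted effort, player `m` is therefore active exactly when `γ B < λ_m`, so
by monotonicity the active players are `0, …, N - 1`, and each of them has
`λ_m b_m = B - γ B² / λ_m`. Summing gives `γ B s_N = N - 1`, which makes the participation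
margin of `N` positive and that of `N + 1` nonpositive; as the margin is antitone, `N = M`.
An active player's payoff is then `(1 - γ B / λ_m)² = ((s - (M - 1)/λ_m)/s)²`.
-/

open Finset Function Filter Set

section BestResponse

variable {l c γ ahat x y : ℝ}

lemma share_payoff_sub_eq (hl : 0 < l) (hc : 0 < c) (hx : 0 ≤ x) (hy : 0 ≤ y) :
    (l * x / (c + l * x) - γ * x) - (l * y / (c + l * y) - γ * y) =
      (x - y) * (l * c / ((c + l * y) * (c + l * x)) - γ) := by
  have : 0 < c + l * x := by positivity
  have : 0 < c + l * y := by positivity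
  field_simp
  ring

lemma continuousAt_share_slope (hl : 0 < l) (hc : 0 < c) (hy : 0 ≤ y) :
    ContinuousAt (fun x => l * c / ((c + l * y) * (c + l * x))) y :=
  continuousAt_const.div (by fun_prop) (by positivity)

lemma IsMaxOn.mul_le_sq_of_lt (h : IsMaxOn (fun x => l * x / (c + l * x) - γ * x) (Icc 0 ahat) y)
    (hl : 0 < l) (hc : 0 < c) (hy : 0 ≤ y) (hya : y < ahat) :
    l * c ≤ γ * (c + l * y) ^ 2 := by
  have hslope : ∀ x ∈ Ioo y ahat, l * c / ((c + l * y) * (c + l * x)) ≤ γ := fun x hx => by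
    have hfx : l * x / (c + l * x) - γ * x ≤ l * y / (c + l * y) - γ * y :=
      h ⟨hy.trans hx.1.le, hx.2.le⟩
    have := share_payoff_sub_eq (γ := γ) hl hc (hy.trans hx.1.le) hy
    nlinarith [hx.1]
  have := le_of_tendsto ((continuousAt_share_slope hl hc hy).mono_left nhdsWithin_le_nhds)
    (eventually_of_mem (Ioo_mem_nhdsGT hya) hslope)
  dsimp only at this
  rwa [← sq, div_le_iff₀ (by positivity)] at this

lemma IsMaxOn.sq_le_mul_of_pos (h : IsMaxOn (fun x => l * x / (c + l * x) - γ * x) (Icc 0 ahat) y)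
    (hl : 0 < l) (hc : 0 < c) (hy : 0 < y) (hya : y ≤ ahat) :
    γ * (c + l * y) ^ 2 ≤ l * c := by
  have hslope : ∀ x ∈ Ioo 0 y, γ ≤ l * c / ((c + l * y) * (c + l * x)) := fun x hx => by
    have hfx : l * x / (c + l * x) - γ * x ≤ l * y / (c + l * y) - γ * y :=
      h ⟨hx.1.le, hx.2.le.trans hya⟩
    have := share_payoff_sub_eq (γ := γ) hl hc hx.1.le hy.le
    nlinarith [hx.2]
  have := ge_of_tendsto ((continuousAt_share_slope hl hc hy.le).mono_left nhdsWithin_le_nhds)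
    (eventually_of_mem (Ioo_mem_nhdsLT hy) hslope)
  dsimp only at this
  rwa [← sq, le_div_iff₀ (by positivity)] at this

end BestResponse

section Margin

variable {n N M : ℕ} {lam : ℕ → ℝ} {t : ℝ}

noncomputable def participationMargin (lam : ℕ → ℝ) (m : ℕ) : ℝ :=
  ∑ i ∈ range m, 1 / lam i - ((m : ℝ) - 1) / lam (m - 1)

lemma participationMargin_succ (lam : ℕ → ℝ) (m : ℕ) :
    participationMargin lam (m + 1) = ∑ i ∈ range m, 1 / lam i - ((m : ℝ) - 1) / lam m := by
  rw [participationMargin, sum_range_succ, Nat.add_sub_cancel, Nat.cast_succ]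
  ring

lemma participationMargin_antitone (hpos : ∀ i < n, 0 < lam i)
    (hmono : ∀ i j, i ≤ j → j < n → lam j ≤ lam i) {i j : ℕ} (hi : 1 ≤ i) (hij : i ≤ j)
    (hjn : j ≤ n) : participationMargin lam j ≤ participationMargin lam i := by
  induction j, hij using Nat.le_induction with
  | base => exact le_rfl
  | succ j hij ih =>
    refine le_trans ?_ (ih (Nat.le_of_succ_le hjn))
    have hj : (1 : ℝ) ≤ j := by exact_mod_cast hi.trans hij
    rw [participationMargin_succ, participationMargin, sub_le_sub_iff_left]
    exact div_le_div_of_nonneg_left (by linarith) (hpos j hjn)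
      (hmono (j - 1) j (Nat.sub_le j 1) hjn)

lemma sum_one_div_pos (hN : 1 ≤ N) (hpos : ∀ i < N, 0 < lam i) :
    0 < ∑ i ∈ range N, 1 / lam i :=
  sum_pos (fun i hi => one_div_pos.2 (hpos i (mem_range.1 hi))) (nonempty_range_iff.2 (by omega))

lemma participationMargin_pos (hN : 1 ≤ N) (hpos : ∀ i < N, 0 < lam i) (ht : t < lam (N - 1))
    (hsum : t * ∑ i ∈ range N, 1 / lam i = N - 1) : 0 < participationMargin lam N := by
  have hs := sum_one_div_pos hN hpos
  have hl := hpos (N - 1) (by omega)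
  rw [participationMargin, ← hsum, sub_pos, div_lt_iff₀ hl]
  nlinarith

lemma participationMargin_succ_nonpos (hpos : ∀ i ≤ N, 0 < lam i) (ht : lam N ≤ t)
    (hsum : t * ∑ i ∈ range N, 1 / lam i = N - 1) : participationMargin lam (N + 1) ≤ 0 := by
  have hs : 0 ≤ ∑ i ∈ range N, 1 / lam i :=
    sum_nonneg fun i hi => (one_div_pos.2 (hpos i (mem_range.1 hi).le)).le
  rw [participationMargin_succ, ← hsum, sub_nonpos, le_div_iff₀ (hpos N le_rfl)]
  nlinarith

lemma le_of_participationMargin_pos (hpos : ∀ i < n, 0 < lam i)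
    (hmono : ∀ i j, i ≤ j → j < n → lam j ≤ lam i) (hN : N < n → lam N ≤ t)
    (hsum : t * ∑ i ∈ range N, 1 / lam i = N - 1) (hMn : M ≤ n)
    (hM : 0 < participationMargin lam M) : M ≤ N := by
  by_contra! hNM
  have := participationMargin_succ_nonpos (fun i hi => hpos i (by omega)) (hN (by omega)) hsum
  linarith [participationMargin_antitone hpos hmono (by omega : 1 ≤ N + 1) hNM hMn]

end Margin

section Game

variable {n m : ℕ} {lam : ℕ → ℝ} {γ ahat : ℝ} {b : ℕ → ℝ}

def rsgTotal (n : ℕ) (lam b : ℕ → ℝ) : ℝ := ∑ j ∈ range n, lam j * b j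

lemma rsgPayoff_def : rsgPayoff n lam γ b m = lam m * b m / rsgTotal n lam b - γ * b m := rfl

lemma rsgTotal_update (hm : m < n) (x : ℝ) :
    rsgTotal n lam (update b m x) = rsgTotal n lam b - lam m * b m + lam m * x := by
  have hmem : m ∈ range n := mem_range.2 hm
  rw [rsgTotal, rsgTotal, ← add_sum_erase _ _ hmem, ← add_sum_erase _ (fun j => lam j * b j) hmem,
    update_self, sum_congr rfl fun j hj => by rw [update_of_ne (ne_of_mem_erase hj)]]
  ring

lemma lam_mul_le_rsgTotal (hlam : ∀ i < n, 0 ≤ lam i) (hb : ∀ i < n, 0 ≤ b i) (hm : m < n) :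
    lam m * b m ≤ rsgTotal n lam b :=
  single_le_sum (f := fun j => lam j * b j)
    (fun j hj => mul_nonneg (hlam j (mem_range.1 hj)) (hb j (mem_range.1 hj))) (mem_range.2 hm)

lemma IsNashRSG.isMaxOn (h : IsNashRSG n lam γ ahat b) (hm : m < n) :
    IsMaxOn (fun x => lam m * x / (rsgTotal n lam b - lam m * b m + lam m * x) - γ * x)
      (Icc 0 ahat) (b m) := isMaxOn_iff.2 fun x hx => by
  simpa only [sub_add_cancel, rsgPayoff_def, rsgTotal_update hm, update_self]
    using h m hm x hx

lemma IsNashRSG.mul_le_one (h : IsNashRSG n lam γ ahat b) (hpos : ∀ i < n, 0 < lam i)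
    (hb : ∀ i < n, b i ∈ Icc 0 ahat) (hm : m < n) : γ * b m ≤ 1 := by
  have hle := lam_mul_le_rsgTotal (fun i hi => (hpos i hi).le) (fun i hi => (hb i hi).1) hm
  have hshare : lam m * b m / rsgTotal n lam b ≤ 1 :=
    div_le_one_of_le₀ hle ((mul_nonneg (hpos m hm).le (hb m hm).1).trans hle)
  have hdev := isMaxOn_iff.1 (h.isMaxOn hm) 0 ⟨le_rfl, (hb m hm).1.trans (hb m hm).2⟩
  simp only [mul_zero, zero_div, sub_zero, sub_add_cancel] at hdev
  linarith

lemma IsNashRSG.lt_ahat (h : IsNashRSG n lam γ ahat b) (hpos : ∀ i < n, 0 < lam i)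
    (hb : ∀ i < n, b i ∈ Icc 0 ahat) (hγ : 0 < γ) (hahat : (n : ℝ) / γ < ahat) (hm : m < n) :
    b m < ahat := by
  have hn : (1 : ℝ) ≤ n := by exact_mod_cast hm.pos
  calc b m ≤ 1 / γ := by rw [le_div_iff₀ hγ, mul_comm]; exact h.mul_le_one hpos hb hm
    _ ≤ n / γ := by gcongr
    _ < ahat := hahat

lemma IsNashRSG.opp_pos (h : IsNashRSG n lam γ ahat b) (hpos : ∀ i < n, 0 < lam i)
    (hb : ∀ i < n, b i ∈ Icc 0 ahat) (hγ : 0 < γ) (hT : 0 < rsgTotal n lam b) (hm : m < n) :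
    0 < rsgTotal n lam b - lam m * b m := by
  have hle := lam_mul_le_rsgTotal (fun i hi => (hpos i hi).le) (fun i hi => (hb i hi).1) hm
  refine (sub_nonneg.2 hle).lt_of_ne fun hzero => ?_
  have hl := hpos m hm
  have hbm : 0 < b m := pos_of_mul_pos_right (by linarith) hl.le
  -- a sole participant keeps the whole resource at half the cost
  have hdev := isMaxOn_iff.1 (h.isMaxOn hm) (b m / 2) ⟨by linarith, by linarith [(hb m hm).2]⟩
  simp only [← hzero, zero_add, div_self (by positivity : lam m * (b m / 2) ≠ 0),
    div_self (by positivity : lam m * b m ≠ 0)] at hdev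
  linarith [mul_pos hγ hbm]

lemma IsNashRSG.lam_mul_opp_le (h : IsNashRSG n lam γ ahat b) (hpos : ∀ i < n, 0 < lam i)
    (hb : ∀ i < n, b i ∈ Icc 0 ahat) (hγ : 0 < γ) (hba : b m < ahat)
    (hT : 0 < rsgTotal n lam b) (hm : m < n) :
    lam m * (rsgTotal n lam b - lam m * b m) ≤ γ * rsgTotal n lam b ^ 2 := by
  simpa only [sub_add_cancel] using (h.isMaxOn hm).mul_le_sq_of_lt (hpos m hm)
    (h.opp_pos hpos hb hγ hT hm) (hb m hm).1 hba

lemma IsNashRSG.lam_mul_opp_eq (h : IsNashRSG n lam γ ahat b) (hpos : ∀ i < n, 0 < lam i)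
    (hb : ∀ i < n, b i ∈ Icc 0 ahat) (hγ : 0 < γ) (hba : b m < ahat)
    (hT : 0 < rsgTotal n lam b) (hm : m < n) (hbm : 0 < b m) :
    lam m * (rsgTotal n lam b - lam m * b m) = γ * rsgTotal n lam b ^ 2 :=
  (h.lam_mul_opp_le hpos hb hγ hba hT hm).antisymm <| by
    simpa only [sub_add_cancel] using (h.isMaxOn hm).sq_le_mul_of_pos (hpos m hm)
      (h.opp_pos hpos hb hγ hT hm) hbm (hb m hm).2

lemma IsNashRSG.pos_iff (h : IsNashRSG n lam γ ahat b) (hpos : ∀ i < n, 0 < lam i)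
    (hb : ∀ i < n, b i ∈ Icc 0 ahat) (hγ : 0 < γ) (hba : b m < ahat)
    (hT : 0 < rsgTotal n lam b) (hm : m < n) :
    0 < b m ↔ γ * rsgTotal n lam b < lam m := by
  have hl := hpos m hm
  constructor
  · intro hbm
    have := h.lam_mul_opp_eq hpos hb hγ hba hT hm hbm
    nlinarith [mul_pos (mul_pos hl hl) hbm]
  · intro hlt
    refine (hb m hm).1.lt_of_ne fun hzero => ?_
    have := h.lam_mul_opp_le hpos hb hγ hba hT hm
    rw [← hzero, mul_zero, sub_zero] at this
    nlinarith

lemma IsNashRSG.exists_pos_iff_lt (h : IsNashRSG n lam γ ahat b) (hpos : ∀ i < n, 0 < lam i)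
    (hmono : ∀ i j, i ≤ j → j < n → lam j ≤ lam i) (hb : ∀ i < n, b i ∈ Icc 0 ahat)
    (hγ : 0 < γ) (hba : ∀ i < n, b i < ahat) (hT : 0 < rsgTotal n lam b) :
    ∃ N ≤ n, ∀ m < n, (0 < b m ↔ m < N) := by
  have hlower : IsLowerSet {m | m < n ∧ 0 < b m} := by
    rintro j i hij ⟨hj, hbj⟩
    have hi : i < n := hij.trans_lt hj
    refine ⟨hi, (h.pos_iff hpos hb hγ (hba i hi) hT hi).2 ?_⟩
    exact ((h.pos_iff hpos hb hγ (hba j hj) hT hj).1 hbj).trans_le (hmono i j hij hj)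
  obtain huniv | ⟨N, hN⟩ := hlower.eq_univ_or_Iio
  · exact absurd (huniv ▸ mem_univ n : n ∈ {m | m < n ∧ 0 < b m}).1 (lt_irrefl n)
  have hiff : ∀ m, (m < n ∧ 0 < b m) ↔ m < N := fun m => by
    simpa only [mem_ofPred_eq, Set.mem_Iio] using Set.ext_iff.1 hN m
  refine ⟨N, not_lt.1 fun hNn => (lt_irrefl n ((hiff n).2 hNn).1), fun m hm => ?_⟩
  rw [← hiff, and_iff_right hm]

lemma IsNashRSG.mul_sum_one_div_eq (h : IsNashRSG n lam γ ahat b) (hpos : ∀ i < n, 0 < lam i)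
    (hb : ∀ i < n, b i ∈ Icc 0 ahat) (hγ : 0 < γ) (hba : ∀ i < n, b i < ahat)
    (hT : 0 < rsgTotal n lam b) {N : ℕ} (hNn : N ≤ n) (hN : ∀ m < n, (0 < b m ↔ m < N)) :
    γ * rsgTotal n lam b * ∑ i ∈ range N, 1 / lam i = N - 1 := by
  set T := rsgTotal n lam b
  have hsupp : ∑ i ∈ range N, lam i * b i = T := by
    refine sum_subset (range_subset_range.2 hNn) fun i hi hiN => ?_
    have hi := mem_range.1 hi
    have hbi : b i = 0 := ((hb i hi).1.eq_or_lt.resolve_right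
      fun hbi => hiN (mem_range.2 ((hN i hi).1 hbi))).symm
    rw [hbi, mul_zero]
  have hactive : ∀ i ∈ range N, lam i * b i = T - γ * T ^ 2 * (1 / lam i) := fun i hi => by
    have hiN := mem_range.1 hi
    have hin : i < n := hiN.trans_le hNn
    have := h.lam_mul_opp_eq hpos hb hγ (hba i hin) hT hin ((hN i hin).2 hiN)
    field_simp [(hpos i hin).ne']
    linear_combination -this
  rw [sum_congr rfl hactive, sum_sub_distrib, sum_const, card_range, nsmul_eq_mul, ← mul_sum]
    at hsupp
  have : T * (γ * T * ∑ i ∈ range N, 1 / lam i) = T * (N - 1) := by linear_combination -hsupp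
  exact mul_left_cancel₀ hT.ne' this

lemma IsNashRSG.rsgPayoff_eq_sq (h : IsNashRSG n lam γ ahat b) (hpos : ∀ i < n, 0 < lam i)
    (hb : ∀ i < n, b i ∈ Icc 0 ahat) (hγ : 0 < γ) (hba : b m < ahat)
    (hT : 0 < rsgTotal n lam b) (hm : m < n) (hbm : 0 < b m) :
    rsgPayoff n lam γ b m = (1 - γ * rsgTotal n lam b / lam m) ^ 2 := by
  have := h.lam_mul_opp_eq hpos hb hγ hba hT hm hbm
  have hl := (hpos m hm).ne'
  rw [rsgPayoff_def]
  field_simp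
  linear_combination (γ * rsgTotal n lam b - lam m) * this

end Game

theorem asymmetric_rsg_nash_utilities_general (k : ℕ)
    (γ ahat : ℝ) (hγ : 0 < γ) (hahat : (k : ℝ) / γ < ahat)
    (lam : ℕ → ℝ) (hpos : ∀ i < k, 0 < lam i)
    (hmono : ∀ i j, i ≤ j → j < k → lam j ≤ lam i)
    (M : ℕ) (hMk : M ≤ k)
    (hMpos : 0 < (∑ i ∈ Finset.range M, 1 / lam i) - ((M : ℝ) - 1) / lam (M - 1))
    (hMmax : ∀ m, 1 ≤ m → m ≤ k →
      0 < (∑ i ∈ Finset.range m, 1 / lam i) - ((m : ℝ) - 1) / lam (m - 1) → m ≤ M)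
    (b : ℕ → ℝ) (hb : ∀ m < k, b m ∈ Set.Icc (0 : ℝ) ahat)
    (hNE : IsNashRSG k lam γ ahat b)
    (hsum : 0 < ∑ j ∈ Finset.range k, lam j * b j) :
    ∀ m < k,
      rsgPayoff k lam γ b m =
        if m < M then
          (((∑ i ∈ Finset.range M, 1 / lam i) - ((M : ℝ) - 1) / lam m) /
            (∑ i ∈ Finset.range M, 1 / lam i)) ^ 2
        else 0 := by
  have hba : ∀ i < k, b i < ahat := fun i hi => hNE.lt_ahat hpos hb hγ hahat hi
  have hpos_iff := fun m hm => hNE.pos_iff hpos hb hγ (hba m hm) hsum hm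
  obtain ⟨N, hNk, hN⟩ := hNE.exists_pos_iff_lt hpos hmono hb hγ hba hsum
  have hsumN := hNE.mul_sum_one_div_eq hpos hb hγ hba hsum hNk hN
  have hN1 : 1 ≤ N := Nat.one_le_iff_ne_zero.2 fun hN0 => by simp [hN0] at hsumN
  have hlast : γ * rsgTotal k lam b < lam (N - 1) :=
    (hpos_iff _ (by omega)).1 ((hN _ (by omega)).2 (by omega))
  have hnext : N < k → lam N ≤ γ * rsgTotal k lam b := fun hNk =>
    not_lt.1 fun hlt => lt_irrefl N ((hN N hNk).1 ((hpos_iff N hNk).2 hlt))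
  obtain rfl : N = M := le_antisymm
    (hMmax N hN1 hNk (participationMargin_pos hN1 (fun i hi => hpos i (by omega)) hlast hsumN))
    (le_of_participationMargin_pos hpos hmono hnext hsumN hMk hMpos)
  intro m hm
  split_ifs with hmN
  · have hs := (sum_one_div_pos hN1 fun i hi => hpos i (by omega)).ne'
    rw [hNE.rsgPayoff_eq_sq hpos hb hγ (hba m hm) hsum hm ((hN m hm).2 hmN), ← hsumN]
    field_simp
  · rw [rsgPayoff_def, ((hb m hm).1.eq_or_lt.resolve_right fun hbm => hmN ((hN m hm).1 hbm)).symm]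
    simp

/-- Nash-equilibrium utilities in the asymmetric resource-sharing game: `k ≥ 2` players
(indexed `0, …, k − 1`) with ordered positive influence factors
`lam 0 ≥ lam 1 ≥ … ≥ lam (k−1) > 0`, cost factor `γ > 0` and action bound `â > k/γ`.
With `M` the largest `m` (with `1 ≤ m ≤ k`) such that
`∑_{i<m} 1/lam i − (m−1)/lam (m−1) > 0`, and `s := ∑_{m<M} 1/lam m`, at every Nash
equilibrium `b` with `∑_j lam j * b j > 0` the payoffs are
`φ_m(b) = ((s − (M−1)/lam m)/s)²` for `m < M` and `φ_m(b) = 0` for `M ≤ m < k`. -/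
theorem asymmetric_rsg_nash_utilities (k : ℕ) (hk : 2 ≤ k)
    (γ ahat : ℝ) (hγ : 0 < γ) (hahat : (k : ℝ) / γ < ahat)
    (lam : ℕ → ℝ) (hpos : ∀ i < k, 0 < lam i)
    (hmono : ∀ i j, i ≤ j → j < k → lam j ≤ lam i)
    (M : ℕ) (hM1 : 1 ≤ M) (hMk : M ≤ k)
    (hMpos : 0 < (∑ i ∈ Finset.range M, 1 / lam i) - ((M : ℝ) - 1) / lam (M - 1))
    (hMmax : ∀ m, 1 ≤ m → m ≤ k →
      0 < (∑ i ∈ Finset.range m, 1 / lam i) - ((m : ℝ) - 1) / lam (m - 1) → m ≤ M)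
    (b : ℕ → ℝ) (hb : ∀ m < k, b m ∈ Set.Icc (0 : ℝ) ahat)
    (hNE : IsNashRSG k lam γ ahat b)
    (hsum : 0 < ∑ j ∈ Finset.range k, lam j * b j) :
    ∀ m < k,
      rsgPayoff k lam γ b m =
        if m < M then
          (((∑ i ∈ Finset.range M, 1 / lam i) - ((M : ℝ) - 1) / lam m) /
            (∑ i ∈ Finset.range M, 1 / lam i)) ^ 2
        else 0 :=
  asymmetric_rsg_nash_utilities_general k γ ahat hγ hahat lam hpos hmono M hMk hMpos hMmax b hb hNE
    hsum
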